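/- Validity of outcomes in other periods as instruments under serially uncorrelated errors. Suppose that, pointwise on the sample space, Y_t(0) = ξ + λ·F_t + Z'δ_t + U_t for every t = 1,…,T, with normalizations F_1 = 0, F_2 = 1, δ_1 = δ_2 = 0, and that Y_t = Y_t(0) on the event {D=0} for every t; P(D=0) > 0. Assume that, conditionally on {D=0}: E[U_t·U_s | D=0] = 0 for all t ≠ s; and E[U_r | D=0] = 0, E[ξ·U_r | D=0] = 0, E[λ·U_r | D=0] = 0, and E[Z·U_r | D=0] = 0 ∈ ℝ^K for every r. Then for all s, t ≥ 3 with s ≠ t, E[Y_s·V_t | D=0] = 0, where V_t := (U_t − U_1) − F_t·(U_2 − U_1). -/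
import Mathlib


open MeasureTheory ProbabilityTheory

/-- If two functions are a.e. strongly measurable with respect to the conditional
measure `μ[|A]` and agree pointwise on `A`, then they are a.e. equal w.r.t. `μ[|A]`. -/
lemma ae_eq_cond_of_eqOn {Ω : Type*} [MeasurableSpace Ω] (μ : Measure Ω) (A : Set Ω)
    (hA0 : μ A ≠ 0) (hAtop : μ A ≠ ⊤) (f g : Ω → ℝ)
    (hf : AEStronglyMeasurable f (μ[|A])) (hg : AEStronglyMeasurable g (μ[|A]))
    (heq : ∀ ω ∈ A, f ω = g ω) : f =ᵐ[μ[|A]] g := by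
  obtain ⟨φ, hφ, hfφ⟩ := hf
  obtain ⟨ψ, hψ, hgψ⟩ := hg
  set ν := μ[|A] with hν
  have hN0 : ν ({ω | f ω ≠ φ ω} ∪ {ω | g ω ≠ ψ ω}) = 0 :=
    measure_union_null (ae_iff.mp hfφ) (ae_iff.mp hgψ)
  set N := toMeasurable ν ({ω | f ω ≠ φ ω} ∪ {ω | g ω ≠ ψ ω}) with hNdef
  have hNm : MeasurableSet N := measurableSet_toMeasurable ν _
  have hNnull : ν N = 0 := by
    rw [hNdef, measure_toMeasurable]; exact hN0
  have hEm : MeasurableSet {ω | φ ω ≠ ψ ω} :=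
    (hφ.measurableSet_eq_fun hψ).compl
  have hsub : {ω | φ ω ≠ ψ ω} ∩ A ⊆ N := by
    rintro ω ⟨hne, hωA⟩
    by_contra hωN
    have hωU : ω ∉ ({ω | f ω ≠ φ ω} ∪ {ω | g ω ≠ ψ ω}) := fun h =>
      hωN (subset_toMeasurable ν _ h)
    simp only [Set.mem_union, Set.mem_setOf_eq, not_or, not_not] at hωU
    exact hne (hωU.1 ▸ hωU.2 ▸ heq ω hωA)
  have hinv0 : (μ A)⁻¹ ≠ 0 := ENNReal.inv_ne_zero.mpr hAtop
  have hANnull : μ (A ∩ N) = 0 := by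
    have := hNnull
    rw [hν, cond_apply' hNm] at this
    exact (mul_eq_zero.mp this).resolve_left hinv0
  have hEnull : ν {ω | φ ω ≠ ψ ω} = 0 := by
    rw [hν, cond_apply' hEm]
    have : μ (A ∩ {ω | φ ω ≠ ψ ω}) = 0 := by
      refine measure_mono_null ?_ hANnull
      rintro ω ⟨hωA, hωE⟩
      exact ⟨hωA, hsub ⟨hωE, hωA⟩⟩
    rw [this, mul_zero]
  have : ν {ω | f ω ≠ g ω} = 0 := by
    refine measure_mono_null ?_ (measure_union_null hNnull hEnull)
    intro ω hω
    by_contra hωc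
    simp only [Set.mem_union, Set.mem_setOf_eq, not_or, not_not] at hωc
    have hωN : ω ∉ ({ω | f ω ≠ φ ω} ∪ {ω | g ω ≠ ψ ω}) := fun h =>
      hωc.1 (subset_toMeasurable ν _ h)
    simp only [Set.mem_union, Set.mem_setOf_eq, not_or, not_not] at hωN
    exact hω (hωN.1.trans (hωc.2.trans hωN.2.symm))
  exact ae_iff.mpr this

/-- Validity of outcomes in other periods as instruments
under serially uncorrelated errors. Under the IFE model with normalizations,
`Y_t = Y_t(0)` on `{D=0}` for every `t`, `P(D=0) > 0`, serially uncorrelated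
errors conditionally on `{D=0}`, and the orthogonality conditions
`E[U_r|D=0] = E[ξ·U_r|D=0] = E[λ·U_r|D=0] = 0` and `E[Z·U_r|D=0] = 0` for
every `r`, we have `E[Y_s·V_t|D=0] = 0` for all `s, t ≥ 3` with `s ≠ t`,
where `V_t = (U_t − U_1) − F_t·(U_2 − U_1)`. -/
theorem statement16
    {Ω : Type*} [MeasurableSpace Ω] (μ : Measure Ω) [IsProbabilityMeasure μ]
    (T K : ℕ) (hT : 4 ≤ T)
    (Y0 Y U : ℕ → Ω → ℝ) (ξ lam : Ω → ℝ) (Z : Ω → Fin K → ℝ) (D : Ω → ℝ)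
    (F : ℕ → ℝ) (δ : ℕ → Fin K → ℝ)
    (hD : ∀ ω, D ω = 0 ∨ D ω = 1)
    (hmodel : ∀ t, 1 ≤ t → t ≤ T → ∀ ω,
      Y0 t ω = ξ ω + lam ω * F t + (∑ k, Z ω k * δ t k) + U t ω)
    (hF1 : F 1 = 0) (hF2 : F 2 = 1) (hδ1 : δ 1 = 0) (hδ2 : δ 2 = 0)
    (hobs : ∀ t, 1 ≤ t → t ≤ T → ∀ ω, D ω = 0 → Y t ω = Y0 t ω)
    (hpos : 0 < μ {ω | D ω = 0})
    (hUU : ∀ t s, 1 ≤ t → t ≤ T → 1 ≤ s → s ≤ T → t ≠ s →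
      ∫ ω, U t ω * U s ω ∂μ[|{ω | D ω = 0}] = 0)
    (hU : ∀ r, 1 ≤ r → r ≤ T → ∫ ω, U r ω ∂μ[|{ω | D ω = 0}] = 0)
    (hξU : ∀ r, 1 ≤ r → r ≤ T → ∫ ω, ξ ω * U r ω ∂μ[|{ω | D ω = 0}] = 0)
    (hlamU : ∀ r, 1 ≤ r → r ≤ T → ∫ ω, lam ω * U r ω ∂μ[|{ω | D ω = 0}] = 0)
    (hZU : ∀ r, 1 ≤ r → r ≤ T → ∀ k,
      ∫ ω, Z ω k * U r ω ∂μ[|{ω | D ω = 0}] = 0)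
    (hintUU : ∀ t s, 1 ≤ t → t ≤ T → 1 ≤ s → s ≤ T →
      Integrable (fun ω => U t ω * U s ω) (μ[|{ω | D ω = 0}]))
    (hintU : ∀ r, 1 ≤ r → r ≤ T → Integrable (U r) (μ[|{ω | D ω = 0}]))
    (hintξU : ∀ r, 1 ≤ r → r ≤ T →
      Integrable (fun ω => ξ ω * U r ω) (μ[|{ω | D ω = 0}]))
    (hintlamU : ∀ r, 1 ≤ r → r ≤ T →
      Integrable (fun ω => lam ω * U r ω) (μ[|{ω | D ω = 0}]))
    (hintZU : ∀ r, 1 ≤ r → r ≤ T → ∀ k,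
      Integrable (fun ω => Z ω k * U r ω) (μ[|{ω | D ω = 0}])) :
    ∀ s t, 3 ≤ s → s ≤ T → 3 ≤ t → t ≤ T → s ≠ t →
      ∫ ω, Y s ω * ((U t ω - U 1 ω) - F t * (U 2 ω - U 1 ω))
        ∂μ[|{ω | D ω = 0}] = 0 := by
  intro s t hs3 hsT ht3 htT hst
  set A := {ω | D ω = 0} with hA
  set ν := μ[|A] with hν
  have hs1 : 1 ≤ s := by omega
  have ht1 : 1 ≤ t := by omega
  have h1T : 1 ≤ T := by omega
  have h2T : 2 ≤ T := by omega
  have hs1' : s ≠ 1 := by omega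
  have hs2' : s ≠ 2 := by omega
  -- Key computation: for X orthogonal to U_t, U_1, U_2, X·V_t is integrable with zero mean.
  have key : ∀ X : Ω → ℝ,
      Integrable (fun ω => X ω * U t ω) ν → Integrable (fun ω => X ω * U 1 ω) ν →
      Integrable (fun ω => X ω * U 2 ω) ν →
      (∫ ω, X ω * U t ω ∂ν) = 0 → (∫ ω, X ω * U 1 ω ∂ν) = 0 →
      (∫ ω, X ω * U 2 ω ∂ν) = 0 →
      Integrable (fun ω => X ω * ((U t ω - U 1 ω) - F t * (U 2 ω - U 1 ω))) ν ∧
      (∫ ω, X ω * ((U t ω - U 1 ω) - F t * (U 2 ω - U 1 ω)) ∂ν) = 0 := by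
    intro X hit hi1 hi2 h0t h01 h02
    have hA1 : Integrable (fun ω => X ω * U t ω - X ω * U 1 ω) ν := hit.sub hi1
    have hA2 : Integrable (fun ω => F t * (X ω * U 2 ω - X ω * U 1 ω)) ν :=
      (hi2.sub hi1).const_mul (F t)
    have hfun : (fun ω => X ω * ((U t ω - U 1 ω) - F t * (U 2 ω - U 1 ω)))
        = fun ω => (X ω * U t ω - X ω * U 1 ω)
            - F t * (X ω * U 2 ω - X ω * U 1 ω) := by
      funext ω; ring
    rw [hfun]
    refine ⟨hA1.sub hA2, ?_⟩
    rw [integral_sub hA1 hA2, integral_sub hit hi1, integral_const_mul,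
      integral_sub hi2 hi1, h0t, h01, h02]
    ring
  have kξ := key ξ (hintξU t ht1 htT) (hintξU 1 le_rfl h1T) (hintξU 2 one_le_two h2T)
    (hξU t ht1 htT) (hξU 1 le_rfl h1T) (hξU 2 one_le_two h2T)
  have klam := key lam (hintlamU t ht1 htT) (hintlamU 1 le_rfl h1T)
    (hintlamU 2 one_le_two h2T) (hlamU t ht1 htT) (hlamU 1 le_rfl h1T)
    (hlamU 2 one_le_two h2T)
  have kZ : ∀ k : Fin K,
      Integrable (fun ω => Z ω k * ((U t ω - U 1 ω) - F t * (U 2 ω - U 1 ω))) ν ∧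
      (∫ ω, Z ω k * ((U t ω - U 1 ω) - F t * (U 2 ω - U 1 ω)) ∂ν) = 0 := fun k =>
    key (fun ω => Z ω k) (hintZU t ht1 htT k) (hintZU 1 le_rfl h1T k)
      (hintZU 2 one_le_two h2T k) (hZU t ht1 htT k) (hZU 1 le_rfl h1T k)
      (hZU 2 one_le_two h2T k)
  have kU := key (U s) (hintUU s t hs1 hsT ht1 htT) (hintUU s 1 hs1 hsT le_rfl h1T)
    (hintUU s 2 hs1 hsT one_le_two h2T) (hUU s t hs1 hsT ht1 htT hst)
    (hUU s 1 hs1 hsT le_rfl h1T hs1') (hUU s 2 hs1 hsT one_le_two h2T hs2')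
  have iξ : Integrable (fun ω => ξ ω * ((U t ω - U 1 ω) - F t * (U 2 ω - U 1 ω))) ν := kξ.1
  have ilam : Integrable (fun ω => F s * (lam ω * ((U t ω - U 1 ω) - F t * (U 2 ω - U 1 ω)))) ν := klam.1.const_mul (F s)
  have isum : Integrable (fun ω => ∑ k, δ s k * (Z ω k * ((U t ω - U 1 ω) - F t * (U 2 ω - U 1 ω)))) ν :=
    integrable_finset_sum _ (fun k _ => (kZ k).1.const_mul (δ s k))
  have iU : Integrable (fun ω => U s ω * ((U t ω - U 1 ω) - F t * (U 2 ω - U 1 ω))) ν := kU.1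
  have i12 : Integrable (fun ω => ξ ω * ((U t ω - U 1 ω) - F t * (U 2 ω - U 1 ω)) + F s * (lam ω * ((U t ω - U 1 ω) - F t * (U 2 ω - U 1 ω)))) ν := iξ.add ilam
  have i123 : Integrable (fun ω => ξ ω * ((U t ω - U 1 ω) - F t * (U 2 ω - U 1 ω)) + F s * (lam ω * ((U t ω - U 1 ω) - F t * (U 2 ω - U 1 ω)))
      + ∑ k, δ s k * (Z ω k * ((U t ω - U 1 ω) - F t * (U 2 ω - U 1 ω)))) ν := i12.add isum
  have hgint : Integrable (fun ω => ξ ω * ((U t ω - U 1 ω) - F t * (U 2 ω - U 1 ω)) + F s * (lam ω * ((U t ω - U 1 ω) - F t * (U 2 ω - U 1 ω)))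
      + (∑ k, δ s k * (Z ω k * ((U t ω - U 1 ω) - F t * (U 2 ω - U 1 ω)))) + U s ω * ((U t ω - U 1 ω) - F t * (U 2 ω - U 1 ω))) ν := i123.add iU
  have hg0 : ∫ ω, (ξ ω * ((U t ω - U 1 ω) - F t * (U 2 ω - U 1 ω)) + F s * (lam ω * ((U t ω - U 1 ω) - F t * (U 2 ω - U 1 ω)))
      + (∑ k, δ s k * (Z ω k * ((U t ω - U 1 ω) - F t * (U 2 ω - U 1 ω)))) + U s ω * ((U t ω - U 1 ω) - F t * (U 2 ω - U 1 ω))) ∂ν = 0 := by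
    rw [integral_add i123 iU, integral_add i12 isum, integral_add iξ ilam,
      integral_const_mul, integral_finset_sum _ (fun k _ => (kZ k).1.const_mul (δ s k))]
    have hsum0 : ∀ k : Fin K, (∫ ω, δ s k * (Z ω k * ((U t ω - U 1 ω) - F t * (U 2 ω - U 1 ω))) ∂ν) = 0 := by
      intro k
      rw [integral_const_mul, (kZ k).2, mul_zero]
    rw [Finset.sum_congr rfl (fun k _ => hsum0 k), Finset.sum_const_zero,
      kξ.2, klam.2, kU.2]
    ring
  have heqA : ∀ ω ∈ A, Y s ω * ((U t ω - U 1 ω) - F t * (U 2 ω - U 1 ω))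
      = ξ ω * ((U t ω - U 1 ω) - F t * (U 2 ω - U 1 ω)) + F s * (lam ω * ((U t ω - U 1 ω) - F t * (U 2 ω - U 1 ω)))
      + (∑ k, δ s k * (Z ω k * ((U t ω - U 1 ω) - F t * (U 2 ω - U 1 ω)))) + U s ω * ((U t ω - U 1 ω) - F t * (U 2 ω - U 1 ω)) := by
    intro ω hω
    have hY : Y s ω = Y0 s ω := hobs s hs1 hsT ω hω
    have hM := hmodel s hs1 hsT ω
    rw [hY, hM]
    have hsum : (∑ k, Z ω k * δ s k) * ((U t ω - U 1 ω) - F t * (U 2 ω - U 1 ω))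
        = ∑ k, δ s k * (Z ω k * ((U t ω - U 1 ω) - F t * (U 2 ω - U 1 ω))) := by
      rw [Finset.sum_mul]
      exact Finset.sum_congr rfl (fun k _ => by ring)
    rw [← hsum]
    ring
  by_cases hfint : Integrable (fun ω => Y s ω * ((U t ω - U 1 ω) - F t * (U 2 ω - U 1 ω))) ν
  · have hae := ae_eq_cond_of_eqOn μ A hpos.ne' (measure_ne_top μ A)
      (fun ω => Y s ω * ((U t ω - U 1 ω) - F t * (U 2 ω - U 1 ω)))
      (fun ω => ξ ω * ((U t ω - U 1 ω) - F t * (U 2 ω - U 1 ω)) + F s * (lam ω * ((U t ω - U 1 ω) - F t * (U 2 ω - U 1 ω)))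
        + (∑ k, δ s k * (Z ω k * ((U t ω - U 1 ω) - F t * (U 2 ω - U 1 ω)))) + U s ω * ((U t ω - U 1 ω) - F t * (U 2 ω - U 1 ω)))
      hfint.aestronglyMeasurable hgint.aestronglyMeasurable heqA
    rw [integral_congr_ae hae]
    exact hg0
  · rw [integral_undef hfint]
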